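/- arXiv:2407.20913 — 2 statements merged into one kernel-verified Lean document; each statement's English description precedes it below -/
import Mathlib

section
/- Theorem 4.1, case B2. In addition to the common setup, assume all four regime pairs share the same drift and volatility: b_{ij} = b and σ_{ij} = σ for all i, j ∈ {1,2} (hence K_{11} = K_{12} = K_{21} = K_{22} =: K), and assume c12 < 0, c21 > 0, χ12 > 0, χ21 > 0 and c12 + c21 > 0 (Condition B2). Then the quadruple v11(x) = K·x^γ − c12, v12(x) = K·x^γ − c12, v21(x) = K·x^γ, v22(x) = K·x^γ solves the QVI system at every x > 0. -/
/-!
On `x > 0` the generator multiplies `x ^ γ` by `b γ + σ² γ (γ - 1) / 2` and ignores additive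
constants, so `K x ^ γ` solves `r v - L v = x ^ γ` exactly. In every line of the system one term of
the `min` is then `0` and the other is `-r c12 ≥ 0` or `c12 + c21 > 0`, while the switching term of
the `max` is `-χ12 < 0` or `-χ21 < 0`.
-/

noncomputable def Lop (b σ : ℝ) (v : ℝ → ℝ) (x : ℝ) : ℝ :=
  (1/2) * σ^2 * x^2 * deriv (deriv v) x + b * x * deriv v x

def solvesQVI (r γ c12 c21 χ12 χ21 b11 σ11 b12 σ12 b21 σ21 b22 σ22 : ℝ)
    (v11 v12 v21 v22 : ℝ → ℝ) (x : ℝ) : Prop :=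
  max (min (r * v11 x - Lop b11 σ11 v11 x - x ^ γ) (v11 x - (v21 x - c12)))
      (v11 x - (v12 x + χ12)) = 0 ∧
  max (min (r * v12 x - Lop b12 σ12 v12 x - x ^ γ) (v12 x - (v22 x - c12)))
      (v12 x - (v11 x + χ21)) = 0 ∧
  max (min (r * v21 x - Lop b21 σ21 v21 x - x ^ γ) (v21 x - (v11 x - c21)))
      (v21 x - (v22 x + χ12)) = 0 ∧
  max (min (r * v22 x - Lop b22 σ22 v22 x - x ^ γ) (v22 x - (v12 x - c21)))
      (v22 x - (v21 x + χ21)) = 0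

lemma deriv_const_mul_rpow (K p : ℝ) :
    deriv (fun y : ℝ => K * y ^ p) = fun y => K * p * y ^ (p - 1) := by
  funext y
  simp only [deriv_const_mul_field', Real.deriv_rpow_const, mul_assoc]

lemma Lop_sub_const (b σ C : ℝ) (v : ℝ → ℝ) : Lop b σ (fun y => v y - C) = Lop b σ v := by
  have hv : deriv (fun y => v y - C) = deriv v := funext fun _ => deriv_sub_const C
  funext x
  rw [Lop, Lop, hv]

lemma Lop_const_mul_rpow (b σ K γ : ℝ) {x : ℝ} (hx : 0 < x) :
    Lop b σ (fun y => K * y ^ γ) x = (b * γ + 1 / 2 * σ ^ 2 * γ * (γ - 1)) * (K * x ^ γ) := by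
  have hx1 : x * x ^ (γ - 1) = x ^ γ := by
    rw [mul_comm, ← Real.rpow_add_one hx.ne', sub_add_cancel]
  have hx2 : x ^ 2 * x ^ (γ - 1 - 1) = x ^ γ := by
    rw [mul_comm, ← Real.rpow_add_natCast hx.ne']
    congr 1
    push_cast
    ring
  rw [Lop, deriv_const_mul_rpow, deriv_const_mul_rpow]
  linear_combination (1 / 2 * σ ^ 2 * K * γ * (γ - 1)) * hx2 + (b * K * γ) * hx1

lemma sub_Lop_const_mul_rpow_eq_rpow {r b σ K γ : ℝ}
    (hK : K * (r - b * γ + 1 / 2 * σ ^ 2 * γ * (1 - γ)) = 1) {x : ℝ} (hx : 0 < x) :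
    r * (K * x ^ γ) - Lop b σ (fun y => K * y ^ γ) x = x ^ γ := by
  rw [Lop_const_mul_rpow b σ K γ hx]
  linear_combination x ^ γ * hK

lemma max_min_eq_zero_of_right {a b c : ℝ} (ha : 0 ≤ a) (hb : b = 0) (hc : c ≤ 0) :
    max (min a b) c = 0 := by
  rw [hb, min_eq_right ha, max_eq_left hc]

lemma max_min_eq_zero_of_left {a b c : ℝ} (ha : a = 0) (hb : 0 ≤ b) (hc : c ≤ 0) :
    max (min a b) c = 0 := by
  rw [ha, min_eq_left hb, max_eq_left hc]

theorem thm4_1_B2_general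
    (r γ c12 c21 χ12 χ21 : ℝ)
    (b11 σ11 b12 σ12 b21 σ21 b22 σ22 : ℝ)
    (K11 : ℝ)
    (hr : 0 < r)
    (hd11 : 0 < r - b11*γ + (1/2)*σ11^2*γ*(1-γ))
    (hK11 : K11 = 1/(r - b11*γ + (1/2)*σ11^2*γ*(1-γ)))
    (heqb12 : b12 = b11) (heqb21 : b21 = b11) (heqb22 : b22 = b11)
    (heqσ12 : σ12 = σ11) (heqσ21 : σ21 = σ11) (heqσ22 : σ22 = σ11)
    (K : ℝ) (hK : K = K11)
    (hc12 : c12 < 0) (hχ12 : 0 < χ12) (hχ21 : 0 < χ21)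
    (hcsum : 0 < c12 + c21)
    :
    ∀ x : ℝ, 0 < x →
      solvesQVI r γ c12 c21 χ12 χ21 b11 σ11 b12 σ12 b21 σ21 b22 σ22
        (fun y => K * y ^ γ - c12)
        (fun y => K * y ^ γ - c12)
        (fun y => K * y ^ γ)
        (fun y => K * y ^ γ) x := by
  intro x hx
  subst b12 b21 b22 σ12 σ21 σ22
  have hKd : K * (r - b11 * γ + 1 / 2 * σ11 ^ 2 * γ * (1 - γ)) = 1 := by
    rw [hK, hK11, one_div, inv_mul_cancel₀ hd11.ne']
  have hres := sub_Lop_const_mul_rpow_eq_rpow (σ := σ11) hKd hx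
  have hres_sub : r * (K * x ^ γ - c12) - Lop b11 σ11 (fun y => K * y ^ γ - c12) x - x ^ γ
      = r * -c12 := by
    rw [Lop_sub_const b11 σ11 c12 (fun y => K * y ^ γ)]
    linear_combination hres
  have hrc : 0 ≤ r * -c12 := mul_nonneg hr.le (neg_nonneg.mpr hc12.le)
  refine ⟨?_, ?_, ?_, ?_⟩
  · exact max_min_eq_zero_of_right (hres_sub ▸ hrc) (sub_self _) (by linarith)
  · exact max_min_eq_zero_of_right (hres_sub ▸ hrc) (sub_self _) (by linarith)
  · exact max_min_eq_zero_of_left (by linear_combination hres) (by linarith) (by linarith)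
  · exact max_min_eq_zero_of_left (by linear_combination hres) (by linarith) (by linarith)

theorem thm4_1_B2
    (r γ c12 c21 χ12 χ21 : ℝ)
    (b11 σ11 b12 σ12 b21 σ21 b22 σ22 : ℝ)
    (K11 K12 K21 K22 : ℝ)
    (hr : 0 < r) (hγ0 : 0 < γ) (hγ1 : γ < 1)
    (hσ11 : 0 < σ11) (hσ12 : 0 < σ12) (hσ21 : 0 < σ21) (hσ22 : 0 < σ22)
    (hd11 : 0 < r - b11*γ + (1/2)*σ11^2*γ*(1-γ))
    (hd12 : 0 < r - b12*γ + (1/2)*σ12^2*γ*(1-γ))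
    (hd21 : 0 < r - b21*γ + (1/2)*σ21^2*γ*(1-γ))
    (hd22 : 0 < r - b22*γ + (1/2)*σ22^2*γ*(1-γ))
    (hrb11 : b11 < r) (hrb12 : b12 < r) (hrb21 : b21 < r) (hrb22 : b22 < r)
    (hK11 : K11 = 1/(r - b11*γ + (1/2)*σ11^2*γ*(1-γ)))
    (hK12 : K12 = 1/(r - b12*γ + (1/2)*σ12^2*γ*(1-γ)))
    (hK21 : K21 = 1/(r - b21*γ + (1/2)*σ21^2*γ*(1-γ)))
    (hK22 : K22 = 1/(r - b22*γ + (1/2)*σ22^2*γ*(1-γ)))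
    (heqb12 : b12 = b11) (heqb21 : b21 = b11) (heqb22 : b22 = b11)
    (heqσ12 : σ12 = σ11) (heqσ21 : σ21 = σ11) (heqσ22 : σ22 = σ11)
    (K : ℝ) (hK : K = K11)
    (hc12 : c12 < 0) (hc21 : 0 < c21) (hχ12 : 0 < χ12) (hχ21 : 0 < χ21)
    (hcsum : 0 < c12 + c21)
    :
    ∀ x : ℝ, 0 < x →
      solvesQVI r γ c12 c21 χ12 χ21 b11 σ11 b12 σ12 b21 σ21 b22 σ22
        (fun y => K * y ^ γ - c12)
        (fun y => K * y ^ γ - c12)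
        (fun y => K * y ^ γ)
        (fun y => K * y ^ γ) x :=
  thm4_1_B2_general r γ c12 c21 χ12 χ21 b11 σ11 b12 σ12 b21 σ21 b22 σ22 K11 hr hd11 hK11 heqb12
    heqb21 heqb22 heqσ12 heqσ21 heqσ22 K hK hc12 hχ12 hχ21 hcsum
end

section
/- Theorem 4.3, case B1. In addition to the common setup, assume b11 = b12, σ11 = σ12, b21 = b22, σ21 = σ22, and K₁ := K_{11} = K_{12} > K_{21} = K_{22} =: K₂; assume c12 > 0, c21 > 0, χ12 > 0, χ21 > 0 (Condition B1). Let m⁺ := m_{21}⁺ (= m_{22}⁺), x* := (m⁺·c21 / ((m⁺ − γ)·(K₁ − K₂)))^{1/γ} and A := (K₁ − K₂)·(γ/m⁺)·(x*)^{γ − m⁺}. Define v11(x) = v12(x) = K₁·x^γ for all x > 0, and v21(x) = v22(x) = K₂·x^γ + A·x^{m⁺} for 0 < x < x* and = K₁·x^γ − c21 for x ≥ x*. Then this quadruple solves the QVI system at every x > 0 with x ≠ x*. -/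
open Filter Topology

/-- `Lop b σ (fun x => x ^ p) = gbmSymbol b σ p * x ^ p` on `(0, ∞)`. -/
noncomputable def gbmSymbol (b σ p : ℝ) : ℝ := (1/2) * σ^2 * p * (p - 1) + b * p

/-- The larger root of `gbmSymbol b σ p = r`. -/
noncomputable def largerRoot (b σ r : ℝ) : ℝ :=
  1/2 - b/σ^2 + √((1/2 - b/σ^2)^2 + 2*r/σ^2)

noncomputable def switchValue (γ m K₁ K₂ A c xs : ℝ) (y : ℝ) : ℝ :=
  if y < xs then K₂ * y ^ γ + A * y ^ m else K₁ * y ^ γ - c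

section Symbol

variable {b σ r : ℝ}

lemma sub_gbmSymbol (γ : ℝ) :
    r - gbmSymbol b σ γ = r - b*γ + (1/2)*σ^2*γ*(1-γ) := by
  unfold gbmSymbol; ring

lemma gbmSymbol_sub_eq (hσ : σ ≠ 0) (p : ℝ) :
    gbmSymbol b σ p - r =
      σ^2/2 * ((p - (1/2 - b/σ^2))^2 - ((1/2 - b/σ^2)^2 + 2*r/σ^2)) := by
  unfold gbmSymbol; field_simp; ring

lemma largerRoot_spec {γ : ℝ} (hσ : σ ≠ 0) (hγ : gbmSymbol b σ γ < r) :
    gbmSymbol b σ (largerRoot b σ r) = r ∧ γ < largerRoot b σ r := by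
  set a := 1/2 - b/σ^2
  set d := a^2 + 2*r/σ^2
  have key : ∀ p, gbmSymbol b σ p - r = σ^2/2 * ((p - a)^2 - d) := gbmSymbol_sub_eq hσ
  have hσ2 : 0 < σ^2/2 := by positivity
  have hγd : (γ - a)^2 < d := by
    have := key γ
    nlinarith
  have hd : √d ^ 2 = d := Real.sq_sqrt ((sq_nonneg _).trans hγd.le)
  refine ⟨?_, ?_⟩
  · have := key (a + √d)
    rw [add_sub_cancel_left, hd, sub_self, mul_zero] at this
    exact sub_eq_zero.mp this
  · have : γ - a < √d :=
      calc γ - a ≤ |γ - a| := le_abs_self _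
        _ = √((γ - a)^2) := (Real.sqrt_sq_eq_abs _).symm
        _ < √d := Real.sqrt_lt_sqrt (sq_nonneg _) hγd
    change γ < a + √d
    linarith

/-- `p ↦ gbmSymbol b σ p / p` is increasing. -/
lemma mul_gbmSymbol_le {γ m : ℝ} (hγ : 0 ≤ γ) (hγm : γ ≤ m) :
    m * gbmSymbol b σ γ ≤ γ * gbmSymbol b σ m := by
  have hdiff : γ * gbmSymbol b σ m - m * gbmSymbol b σ γ = σ^2/2 * γ * m * (m - γ) := by
    unfold gbmSymbol; ring
  have hm : 0 ≤ m := hγ.trans hγm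
  have hmγ : 0 ≤ m - γ := sub_nonneg.mpr hγm
  have : 0 ≤ σ^2/2 * γ * m * (m - γ) := by positivity
  linarith

end Symbol

section Generator

variable {b σ r K A c p q x : ℝ}

lemma Lop_congr {v w : ℝ → ℝ} (h : v =ᶠ[𝓝 x] w) : Lop b σ v x = Lop b σ w x := by
  unfold Lop
  rw [h.deriv_eq, h.deriv.deriv_eq]

lemma Lop_rpow_add (hx : 0 < x) :
    Lop b σ (fun y => K * y^p + A * y^q + c) x =
      K * gbmSymbol b σ p * x^p + A * gbmSymbol b σ q * x^q := by
  have hasDeriv : ∀ y : ℝ, 0 < y → HasDerivAt (fun y => K * y^p + A * y^q + c)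
      (K * (p * y^(p-1)) + A * (q * y^(q-1))) y := fun y hy =>
    (((Real.hasDerivAt_rpow_const (Or.inl hy.ne')).const_mul K).add
      ((Real.hasDerivAt_rpow_const (Or.inl hy.ne')).const_mul A)).add_const c
  have hasDeriv2 : HasDerivAt (fun y => K * (p * y^(p-1)) + A * (q * y^(q-1)))
      (K * (p * ((p-1) * x^(p-1-1))) + A * (q * ((q-1) * x^(q-1-1)))) x :=
    (((Real.hasDerivAt_rpow_const (Or.inl hx.ne')).const_mul p).const_mul K).add
      (((Real.hasDerivAt_rpow_const (Or.inl hx.ne')).const_mul q).const_mul A)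
  have hderiv : deriv (fun y => K * y^p + A * y^q + c) =ᶠ[𝓝 x]
      fun y => K * (p * y^(p-1)) + A * (q * y^(q-1)) := by
    filter_upwards [Ioi_mem_nhds hx] with y hy using (hasDeriv y hy).deriv
  rw [Lop, (hasDeriv x hx).deriv, hderiv.deriv_eq, hasDeriv2.deriv]
  simp only [Real.rpow_sub_one hx.ne', gbmSymbol]
  field_simp
  ring

lemma resolvent_rpow_add {γ m : ℝ} {v : ℝ → ℝ} (hx : 0 < x)
    (hv : v =ᶠ[𝓝 x] fun y => K * y^γ + A * y^m + c) :
    r * v x - Lop b σ v x - x^γ =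
      (K * (r - gbmSymbol b σ γ) - 1) * x^γ + A * (r - gbmSymbol b σ m) * x^m + r * c := by
  rw [Lop_congr hv, Lop_rpow_add hx, hv.self_of_nhds]
  ring

end Generator

section Inequalities

variable {γ m x y : ℝ}

/-- Weighted AM-GM, in the form of a tangent bound for `x^γ` at `y`. -/
lemma rpow_le_weighted_rpow (hγ : 0 ≤ γ) (hγm : γ ≤ m) (hm : 0 < m) (hx : 0 ≤ x)
    (hy : 0 < y) :
    x^γ ≤ γ/m * y^(γ-m) * x^m + (m-γ)/m * y^γ := by
  have amgm := Real.geom_mean_le_arith_mean2_weighted (div_nonneg hγ hm.le)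
    (div_nonneg (sub_nonneg.mpr hγm) hm.le) (Real.rpow_nonneg hx m)
    (Real.rpow_nonneg hy.le m) (by field_simp; ring)
  rw [← Real.rpow_mul hx, ← Real.rpow_mul hy.le, mul_div_cancel₀ _ hm.ne',
    mul_div_cancel₀ _ hm.ne'] at amgm
  have hy' : y^(γ-m) * y^(m-γ) = 1 := by
    rw [← Real.rpow_add hy, show γ - m + (m - γ) = 0 by ring, Real.rpow_zero]
  have hy'' : y^(γ-m) * y^m = y^γ := by
    rw [← Real.rpow_add hy, sub_add_cancel]
  calc x^γ = y^(γ-m) * (x^γ * y^(m-γ)) := by linear_combination (-x^γ) * hy'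
    _ ≤ y^(γ-m) * (γ/m * x^m + (m-γ)/m * y^m) :=
        mul_le_mul_of_nonneg_left amgm (Real.rpow_nonneg hy.le _)
    _ = γ/m * y^(γ-m) * x^m + (m-γ)/m * y^γ := by linear_combination (m-γ)/m * hy''

lemma mul_rpow_le_rpow_of_le (hγ : 0 ≤ γ) (hγm : γ ≤ m) (hx : 0 < x) (hxy : x ≤ y) :
    γ/m * y^(γ-m) * x^m ≤ x^γ := by
  have hpow : y^(γ-m) * x^m ≤ x^γ :=
    calc y^(γ-m) * x^m ≤ x^(γ-m) * x^m := mul_le_mul_of_nonneg_right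
          (Real.rpow_le_rpow_of_nonpos hx hxy (by linarith)) (Real.rpow_nonneg hx.le _)
      _ = x^γ := by rw [← Real.rpow_add hx, sub_add_cancel]
  have hratio : γ/m ≤ 1 := div_le_one_of_le₀ hγm (hγ.trans hγm)
  have := mul_le_mul hratio hpow
    (mul_nonneg (Real.rpow_nonneg (hx.le.trans hxy) _) (Real.rpow_nonneg hx.le _)) zero_le_one
  linarith

/-- The switching cost is dominated by the gain from switching beyond the threshold. -/
lemma mul_rpow_le_of_gbmSymbol_eq {b σ r : ℝ} (hFm : gbmSymbol b σ m = r)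
    (hγ : 0 ≤ γ) (hγm : γ < m) (hD : 0 ≤ r - gbmSymbol b σ γ) (hy : 0 ≤ y) (hyx : y ≤ x) :
    r * ((m-γ)/m * y^γ) ≤ (r - gbmSymbol b σ γ) * x^γ := by
  have hm : 0 < m := hγ.trans_lt hγm
  have hcoef : r * ((m-γ)/m) ≤ r - gbmSymbol b σ γ := by
    rw [mul_div_assoc', div_le_iff₀ hm]
    nlinarith [mul_gbmSymbol_le (b := b) (σ := σ) hγ hγm.le]
  calc r * ((m-γ)/m * y^γ) = r * ((m-γ)/m) * y^γ := by ring
    _ ≤ (r - gbmSymbol b σ γ) * y^γ :=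
        mul_le_mul_of_nonneg_right hcoef (Real.rpow_nonneg hy _)
    _ ≤ (r - gbmSymbol b σ γ) * x^γ :=
        mul_le_mul_of_nonneg_left (Real.rpow_le_rpow hy hyx hγ) hD

lemma threshold_pos_and_cost_eq {C c xs : ℝ} (hγ : 0 < γ) (hγm : γ < m) (hC : 0 < C)
    (hc : 0 < c) (hxs : xs = (m * c / ((m - γ) * C)) ^ (1/γ)) :
    0 < xs ∧ c = C * ((m-γ)/m) * xs^γ := by
  have hm : 0 < m := hγ.trans hγm
  have hbase : 0 < m * c / ((m - γ) * C) :=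
    div_pos (mul_pos hm hc) (mul_pos (sub_pos.mpr hγm) hC)
  refine ⟨hxs ▸ Real.rpow_pos_of_pos hbase _, ?_⟩
  rw [hxs, one_div, Real.rpow_inv_rpow hbase.le hγ.ne']
  field_simp [(sub_pos.mpr hγm).ne']

end Inequalities

section Regions

variable {b σ r γ m K₁ K₂ A c c12 xs x : ℝ}

lemma switchValue_of_lt (hx : 0 < x) (hlt : x < xs) (hFm : gbmSymbol b σ m = r)
    (hK₂ : K₂ * (r - gbmSymbol b σ γ) = 1) (hγ : 0 ≤ γ) (hγm : γ < m) (hC : 0 ≤ K₁ - K₂)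
    (hA : A = (K₁ - K₂) * (γ/m) * xs^(γ-m)) (hc : c = (K₁ - K₂) * ((m-γ)/m) * xs^γ)
    (hc12 : 0 ≤ c12) :
    switchValue γ m K₁ K₂ A c xs x - c12 ≤ K₁ * x^γ ∧
      min (r * switchValue γ m K₁ K₂ A c xs x - Lop b σ (switchValue γ m K₁ K₂ A c xs) x - x^γ)
        (switchValue γ m K₁ K₂ A c xs x - (K₁ * x^γ - c)) = 0 := by
  have hv : switchValue γ m K₁ K₂ A c xs =ᶠ[𝓝 x] fun y => K₂ * y^γ + A * y^m + 0 := by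
    filter_upwards [Iio_mem_nhds hlt] with y hy
    simp only [switchValue, if_pos (show y < xs from hy), add_zero]
  have hval : switchValue γ m K₁ K₂ A c xs x = K₂ * x^γ + A * x^m := by
    simp only [switchValue, if_pos hlt]
  have hupper : A * x^m ≤ (K₁ - K₂) * x^γ := by
    have := mul_le_mul_of_nonneg_left (mul_rpow_le_rpow_of_le hγ hγm.le hx hlt.le) hC
    rw [hA]
    linarith
  have hlower : (K₁ - K₂) * x^γ ≤ A * x^m + c := by
    rw [hA, hc]
    have := mul_le_mul_of_nonneg_left (rpow_le_weighted_rpow hγ hγm.le (hγ.trans_lt hγm)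
      hx.le (hx.trans hlt)) hC
    linarith
  refine ⟨by linarith, ?_⟩
  rw [resolvent_rpow_add hx hv, hK₂, hFm, hval]
  simp only [sub_self, zero_mul, mul_zero, add_zero]
  exact min_eq_left (by linarith)

lemma switchValue_of_gt (hxs : 0 ≤ xs) (hgt : xs < x) (hFm : gbmSymbol b σ m = r)
    (hD : 0 < r - gbmSymbol b σ γ) (hK₂ : K₂ * (r - gbmSymbol b σ γ) = 1) (hγ : 0 ≤ γ)
    (hγm : γ < m) (hC : 0 ≤ K₁ - K₂) (hc : c = (K₁ - K₂) * ((m-γ)/m) * xs^γ)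
    (hc0 : 0 ≤ c) (hc12 : 0 ≤ c12) :
    switchValue γ m K₁ K₂ A c xs x - c12 ≤ K₁ * x^γ ∧
      min (r * switchValue γ m K₁ K₂ A c xs x - Lop b σ (switchValue γ m K₁ K₂ A c xs) x - x^γ)
        (switchValue γ m K₁ K₂ A c xs x - (K₁ * x^γ - c)) = 0 := by
  have hx : 0 < x := hxs.trans_lt hgt
  have hv : switchValue γ m K₁ K₂ A c xs =ᶠ[𝓝 x] fun y => K₁ * y^γ + 0 * y^m + -c := by
    filter_upwards [Ioi_mem_nhds hgt] with y hy
    simp only [switchValue, if_neg (not_lt.mpr (Set.mem_Ioi.mp hy).le), zero_mul, add_zero]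
    ring
  have hval : switchValue γ m K₁ K₂ A c xs x = K₁ * x^γ - c := by
    simp only [switchValue, if_neg (not_lt.mpr hgt.le)]
  have hgain := mul_le_mul_of_nonneg_left
    (mul_rpow_le_of_gbmSymbol_eq hFm hγ hγm hD.le hxs hgt.le) hC
  refine ⟨by linarith, ?_⟩
  rw [resolvent_rpow_add hx hv, hval, sub_self]
  refine min_eq_right ?_
  have : K₁ * (r - gbmSymbol b σ γ) - 1 = (K₁ - K₂) * (r - gbmSymbol b σ γ) := by
    linear_combination hK₂
  rw [this, hc]
  linarith

end Regions

lemma solvesQVI_of_pair {r γ c12 c21 χ12 χ21 b₁ σ₁ b₂ σ₂ x : ℝ} {u w : ℝ → ℝ}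
    (hχ12 : 0 ≤ χ12) (hχ21 : 0 ≤ χ21)
    (hu : r * u x - Lop b₁ σ₁ u x - x ^ γ = 0) (huw : w x - c12 ≤ u x)
    (hw : min (r * w x - Lop b₂ σ₂ w x - x ^ γ) (w x - (u x - c21)) = 0) :
    solvesQVI r γ c12 c21 χ12 χ21 b₁ σ₁ b₁ σ₁ b₂ σ₂ b₂ σ₂ u u w w x := by
  have hmin : min (r * u x - Lop b₁ σ₁ u x - x ^ γ) (u x - (w x - c12)) = 0 := by
    rw [hu]; exact min_eq_left (by linarith)
  refine ⟨?_, ?_, ?_, ?_⟩ <;>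
    first
    | rw [hmin]; exact max_eq_left (by linarith)
    | rw [hw]; exact max_eq_left (by linarith)

theorem thm4_3_B1_general
    (r γ c12 c21 χ12 χ21 : ℝ)
    (b11 σ11 b12 σ12 b21 σ21 b22 σ22 : ℝ)
    (K11 K21 : ℝ)
    (hγ0 : 0 < γ)
    (hσ21 : 0 < σ21)
    (hd11 : 0 < r - b11*γ + (1/2)*σ11^2*γ*(1-γ))
    (hd21 : 0 < r - b21*γ + (1/2)*σ21^2*γ*(1-γ))
    (hK11 : K11 = 1/(r - b11*γ + (1/2)*σ11^2*γ*(1-γ)))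
    (hK21 : K21 = 1/(r - b21*γ + (1/2)*σ21^2*γ*(1-γ)))
    (heqb12 : b12 = b11) (heqσ12 : σ12 = σ11)
    (heqb22 : b22 = b21) (heqσ22 : σ22 = σ21)
    (K₁ K₂ : ℝ) (hK₁ : K₁ = K11) (hK₂ : K₂ = K21)
    (hKgt : K₂ < K₁)
    (m : ℝ) (hm : m = 1/2 - b21/σ21^2 + Real.sqrt ((1/2 - b21/σ21^2)^2 + 2*r/σ21^2))
    (xs A : ℝ)
    (hxs : xs = (m * c21 / ((m - γ) * (K₁ - K₂))) ^ (1/γ))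
    (hA : A = (K₁ - K₂) * (γ / m) * xs ^ (γ - m))
    (hc12 : 0 < c12) (hc21 : 0 < c21) (hχ12 : 0 < χ12) (hχ21 : 0 < χ21)
    :
    ∀ x : ℝ, 0 < x → x ≠ xs →
      solvesQVI r γ c12 c21 χ12 χ21 b11 σ11 b12 σ12 b21 σ21 b22 σ22
        (fun y => K₁ * y ^ γ)
        (fun y => K₁ * y ^ γ)
        (fun y => if y < xs then K₂ * y ^ γ + A * y ^ m else K₁ * y ^ γ - c21)
        (fun y => if y < xs then K₂ * y ^ γ + A * y ^ m else K₁ * y ^ γ - c21) x := by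
  subst b12 σ12 b22 σ22
  intro x hx hxne
  rw [← sub_gbmSymbol] at hd11 hd21 hK11 hK21
  obtain ⟨hFm, hγm⟩ : gbmSymbol b21 σ21 m = r ∧ γ < m := by
    rw [hm]; exact largerRoot_spec hσ21.ne' (sub_pos.mp hd21)
  have hC : 0 < K₁ - K₂ := sub_pos.mpr hKgt
  obtain ⟨hxs0, hc⟩ := threshold_pos_and_cost_eq hγ0 hγm hC hc21 hxs
  have hK₁' : K₁ * (r - gbmSymbol b11 σ11 γ) = 1 := by
    rw [hK₁, hK11, one_div_mul_cancel hd11.ne']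
  have hK₂' : K₂ * (r - gbmSymbol b21 σ21 γ) = 1 := by
    rw [hK₂, hK21, one_div_mul_cancel hd21.ne']
  have hu : r * (K₁ * x^γ) - Lop b11 σ11 (fun y => K₁ * y^γ) x - x^γ = 0 := by
    have hv : (fun y : ℝ => K₁ * y^γ) =ᶠ[𝓝 x] fun y => K₁ * y^γ + 0 * y^γ + 0 :=
      Eventually.of_forall fun y => by ring
    rw [resolvent_rpow_add hx hv, hK₁']
    ring
  rcases hxne.lt_or_gt with hlt | hgt
  · obtain ⟨huw, hw⟩ := switchValue_of_lt hx hlt hFm hK₂' hγ0.le hγm hC.le hA hc hc12.le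
    exact solvesQVI_of_pair hχ12.le hχ21.le hu huw hw
  · obtain ⟨huw, hw⟩ := switchValue_of_gt (A := A) hxs0.le hgt hFm hd21 hK₂' hγ0.le hγm
      hC.le hc hc21.le hc12.le
    exact solvesQVI_of_pair hχ12.le hχ21.le hu huw hw

theorem thm4_3_B1
    (r γ c12 c21 χ12 χ21 : ℝ)
    (b11 σ11 b12 σ12 b21 σ21 b22 σ22 : ℝ)
    (K11 K12 K21 K22 : ℝ)
    (hr : 0 < r) (hγ0 : 0 < γ) (hγ1 : γ < 1)
    (hσ11 : 0 < σ11) (hσ12 : 0 < σ12) (hσ21 : 0 < σ21) (hσ22 : 0 < σ22)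
    (hd11 : 0 < r - b11*γ + (1/2)*σ11^2*γ*(1-γ))
    (hd12 : 0 < r - b12*γ + (1/2)*σ12^2*γ*(1-γ))
    (hd21 : 0 < r - b21*γ + (1/2)*σ21^2*γ*(1-γ))
    (hd22 : 0 < r - b22*γ + (1/2)*σ22^2*γ*(1-γ))
    (hrb11 : b11 < r) (hrb12 : b12 < r) (hrb21 : b21 < r) (hrb22 : b22 < r)
    (hK11 : K11 = 1/(r - b11*γ + (1/2)*σ11^2*γ*(1-γ)))
    (hK12 : K12 = 1/(r - b12*γ + (1/2)*σ12^2*γ*(1-γ)))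
    (hK21 : K21 = 1/(r - b21*γ + (1/2)*σ21^2*γ*(1-γ)))
    (hK22 : K22 = 1/(r - b22*γ + (1/2)*σ22^2*γ*(1-γ)))
    (heqb12 : b12 = b11) (heqσ12 : σ12 = σ11)
    (heqb22 : b22 = b21) (heqσ22 : σ22 = σ21)
    (K₁ K₂ : ℝ) (hK₁ : K₁ = K11) (hK₂ : K₂ = K21)
    (hKgt : K₂ < K₁)
    (m : ℝ) (hm : m = 1/2 - b21/σ21^2 + Real.sqrt ((1/2 - b21/σ21^2)^2 + 2*r/σ21^2))
    (xs A : ℝ)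
    (hxs : xs = (m * c21 / ((m - γ) * (K₁ - K₂))) ^ (1/γ))
    (hA : A = (K₁ - K₂) * (γ / m) * xs ^ (γ - m))
    (hc12 : 0 < c12) (hc21 : 0 < c21) (hχ12 : 0 < χ12) (hχ21 : 0 < χ21)
    :
    ∀ x : ℝ, 0 < x → x ≠ xs →
      solvesQVI r γ c12 c21 χ12 χ21 b11 σ11 b12 σ12 b21 σ21 b22 σ22
        (fun y => K₁ * y ^ γ)
        (fun y => K₁ * y ^ γ)
        (fun y => if y < xs then K₂ * y ^ γ + A * y ^ m else K₁ * y ^ γ - c21)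
        (fun y => if y < xs then K₂ * y ^ γ + A * y ^ m else K₁ * y ^ γ - c21) x :=
  thm4_3_B1_general r γ c12 c21 χ12 χ21 b11 σ11 b12 σ12 b21 σ21 b22 σ22 K11 K21 hγ0 hσ21 hd11 hd21
    hK11 hK21 heqb12 heqσ12 heqb22 heqσ22 K₁ K₂ hK₁ hK₂ hKgt m hm xs A hxs hA hc12 hc21 hχ12 hχ21
end
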